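/- arXiv:1202.0453 — 3 statements merged into one kernel-verified Lean document; each statement's English description precedes it below -/
import Mathlib

section
/- Let H be a numerical semigroup with smallest nonzero element λ₁, and let e be a nonzero element of H. Then the cardinality of H \ (eH* + H) equals eλ₁, where H* = H \ {0} and eH* + H = {eλ + μ : λ ∈ H*, μ ∈ H}. -/
/-!
Every `x ∈ eH* + H` can be rewritten as `eλ₁ + ((l - λ₁)e + m)`, so `eH* + H = eλ₁ + H` and the
set in question is the Apéry set of `H` with respect to `n = eλ₁`. The Apéry set contains exactly
one element of each residue class mod `n`, namely the least element of `H` in that class, so it has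
`n` elements.
-/

/-- A numerical semigroup: a subset of ℕ containing 0, closed under addition,
with finite complement in ℕ. -/
def IsNumericalSemigroup (H : Set ℕ) : Prop :=
  0 ∈ H ∧ (∀ a ∈ H, ∀ b ∈ H, a + b ∈ H) ∧ (Hᶜ : Set ℕ).Finite

def aperySet (H : Set ℕ) (n : ℕ) : Set ℕ :=
  H \ {x | ∃ m ∈ H, x = n + m}

namespace IsNumericalSemigroup

variable {H : Set ℕ} (hH : IsNumericalSemigroup H)
include hH

theorem add_mem {a b : ℕ} (ha : a ∈ H) (hb : b ∈ H) : a + b ∈ H :=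
  hH.2.1 a ha b hb

theorem mul_mem {n : ℕ} (hn : n ∈ H) (k : ℕ) : k * n ∈ H := by
  induction k with
  | zero => simpa using hH.1
  | succ k ih => simpa [Nat.succ_mul] using hH.add_mem ih hn

theorem exists_forall_lt_mem : ∃ c, ∀ x, c < x → x ∈ H := by
  obtain ⟨c, hc⟩ := hH.2.2.bddAbove
  exact ⟨c, fun x hx => by_contra fun hxH => absurd (hc hxH) (by omega)⟩

theorem injOn_aperySet {n : ℕ} (hn : n ∈ H) :
    Set.InjOn (fun x : ℕ => (x : ZMod n)) (aperySet H n) := by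
  suffices key : ∀ a ∈ aperySet H n, ∀ b ∈ aperySet H n, a ≤ b → (a : ZMod n) = b → a = b by
    intro a ha b hb hab
    rcases le_total a b with hle | hle
    exacts [key a ha b hb hle hab, (key b hb a ha hle hab.symm).symm]
  intro a ha b hb hle hab
  obtain ⟨k, hk⟩ := (Nat.modEq_iff_dvd' hle).mp ((ZMod.natCast_eq_natCast_iff a b n).mp hab)
  cases k with
  | zero => omega
  | succ k =>
    have hb_eq : b = n + (a + k * n) := by rw [Nat.mul_succ] at hk; lia
    exact absurd ⟨a + k * n, hH.add_mem ha.1 (hH.mul_mem hn k), hb_eq⟩ hb.2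

theorem exists_mem_aperySet_natCast_eq {n : ℕ} [NeZero n] (r : ZMod n) :
    ∃ x ∈ aperySet H n, (x : ZMod n) = r := by
  classical
  obtain ⟨c, hc⟩ := hH.exists_forall_lt_mem
  have hex : ∃ x ∈ H, (x : ZMod n) = r :=
    ⟨r.val + (c + 1) * n, hc _ (by nlinarith [NeZero.one_le (n := n)]), by simp⟩
  obtain ⟨hxH, hxr⟩ := Nat.find_spec hex
  refine ⟨Nat.find hex, ⟨hxH, ?_⟩, hxr⟩
  rintro ⟨m, hmH, hm⟩
  refine Nat.find_min hex (m := m) (by have := NeZero.pos n; omega) ⟨hmH, ?_⟩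
  simpa [hm] using hxr

theorem ncard_aperySet {n : ℕ} (hn : n ∈ H) : (aperySet H n).ncard = n := by
  obtain rfl | hn0 := eq_or_ne n 0
  · simp [aperySet]
  have : NeZero n := ⟨hn0⟩
  have himage : (fun x : ℕ => (x : ZMod n)) '' aperySet H n = Set.univ :=
    Set.eq_univ_of_forall fun r => hH.exists_mem_aperySet_natCast_eq r
  rw [← (hH.injOn_aperySet hn).ncard_image, himage, Set.ncard_univ, Nat.card_zmod]

theorem setOf_mul_nonzero_add_eq {e lam1 : ℕ} (he : e ∈ H)
    (hlam1 : IsLeast {h | h ∈ H ∧ h ≠ 0} lam1) :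
    {x | ∃ l ∈ H, l ≠ 0 ∧ ∃ m ∈ H, x = e * l + m} = {x | ∃ m ∈ H, x = e * lam1 + m} := by
  ext x
  constructor
  · rintro ⟨l, hlH, hl0, m, hmH, rfl⟩
    have hle : lam1 ≤ l := hlam1.2 ⟨hlH, hl0⟩
    refine ⟨(l - lam1) * e + m, hH.add_mem (hH.mul_mem he _) hmH, ?_⟩
    rw [Nat.sub_mul, ← add_assoc, mul_comm e lam1, mul_comm e l,
      Nat.add_sub_cancel' (Nat.mul_le_mul_right e hle)]
  · rintro ⟨m, hmH, rfl⟩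
    exact ⟨lam1, hlam1.1.1, hlam1.1.2, m, hmH, rfl⟩

end IsNumericalSemigroup

theorem stmt_6_general (H : Set ℕ) (hH : IsNumericalSemigroup H)
    (lam1 : ℕ) (hlam1 : IsLeast {h | h ∈ H ∧ h ≠ 0} lam1)
    (e : ℕ) (he : e ∈ H) :
    (H \ {x | ∃ l ∈ H, l ≠ 0 ∧ ∃ m ∈ H, x = e * l + m}).ncard = e * lam1 := by
  rw [hH.setOf_mul_nonzero_add_eq he hlam1]
  exact hH.ncard_aperySet (mul_comm lam1 e ▸ hH.mul_mem he lam1)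

/-- If λ₁ is the smallest nonzero element of H and e ∈ H is nonzero, then
#(H \ (eH* + H)) = eλ₁, where H* = H \ {0} and eH* + H = {eλ + μ : λ ∈ H*, μ ∈ H}. -/
theorem stmt_6 (H : Set ℕ) (hH : IsNumericalSemigroup H)
    (lam1 : ℕ) (hlam1 : IsLeast {h | h ∈ H ∧ h ≠ 0} lam1)
    (e : ℕ) (he : e ∈ H) (hne : e ≠ 0) :
    (H \ {x | ∃ l ∈ H, l ≠ 0 ∧ ∃ m ∈ H, x = e * l + m}).ncard = e * lam1 :=
  stmt_6_general H hH lam1 hlam1 e he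
end

section
/- Let H be the numerical semigroup generated by 2 and 5 (i.e., H = {0, 2, 4, 5, 6, 7, ...}) and let e = 3. Then e ∉ H, the smallest nonzero element of H is λ₁ = 2, and nevertheless the cardinality of H \ (eH* + H) equals eλ₁ = 6. -/
/-! ⟨2,5⟩ is ℕ with the two gaps 1 and 3, so 3·H* = {6, 12, 15, 18, …} and 3·H* + H consists of
the numbers ≥ 6 other than 7 and 9; what is left of H is {0, 2, 4, 5, 7, 9}. -/

lemma exists_eq_two_mul_add_five_mul_iff (n : ℕ) :
    (∃ a b : ℕ, n = 2 * a + 5 * b) ↔ n ≠ 1 ∧ n ≠ 3 := by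
  constructor
  · rintro ⟨a, b, rfl⟩
    omega
  · rintro ⟨h1, h3⟩
    rcases Nat.even_or_odd n with ⟨k, rfl⟩ | ⟨k, rfl⟩
    · exact ⟨k, 0, by omega⟩
    · exact ⟨k - 2, 1, by omega⟩

lemma setOf_two_mul_add_five_mul :
    {n : ℕ | ∃ a b : ℕ, n = 2 * a + 5 * b} = {n | n ≠ 1 ∧ n ≠ 3} :=
  Set.ext exists_eq_two_mul_add_five_mul_iff

lemma exists_eq_three_mul_add_iff (x : ℕ) :
    (∃ l, (l ≠ 1 ∧ l ≠ 3) ∧ l ≠ 0 ∧ ∃ m, (m ≠ 1 ∧ m ≠ 3) ∧ x = 3 * l + m) ↔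
      6 ≤ x ∧ x ≠ 7 ∧ x ≠ 9 := by
  constructor
  · rintro ⟨l, hl, hl0, m, hm, rfl⟩
    omega
  · intro hx
    exact ⟨2, by omega, by omega, x - 6, by omega, by omega⟩

lemma gaps_one_three_diff_three_mul_add :
    {n : ℕ | n ≠ 1 ∧ n ≠ 3} \
        {x | ∃ l ∈ {n : ℕ | n ≠ 1 ∧ n ≠ 3}, l ≠ 0 ∧ ∃ m ∈ {n : ℕ | n ≠ 1 ∧ n ≠ 3}, x = 3 * l + m} =
      ({0, 2, 4, 5, 7, 9} : Finset ℕ) := by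
  ext x
  simp only [Set.mem_sdiff, Set.mem_ofPred_eq, exists_eq_three_mul_add_iff, Finset.coe_insert,
    Finset.coe_singleton, Set.mem_insert_iff, Set.mem_singleton_iff]
  omega

/-- For H = ⟨2,5⟩ and e = 3: e ∉ H, the smallest nonzero element of H is λ₁ = 2, and
nevertheless #(H \ (eH* + H)) = eλ₁ = 6. So the converse of "e ∈ H ⟹ #(H \ (eH*+H)) = eλ₁"
fails in general. -/
theorem stmt_7 (H : Set ℕ) (hH : H = {n : ℕ | ∃ a b : ℕ, n = 2 * a + 5 * b}) :
    3 ∉ H ∧ IsLeast {h | h ∈ H ∧ h ≠ 0} 2 ∧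
    (H \ {x | ∃ l ∈ H, l ≠ 0 ∧ ∃ m ∈ H, x = 3 * l + m}).ncard = 6 := by
  subst hH
  rw [setOf_two_mul_add_five_mul, gaps_one_three_diff_three_mul_add, Set.ncard_coe_finset]
  refine ⟨by simp, ⟨by simp, fun h ⟨hh, hh0⟩ => ?_⟩, rfl⟩
  simp only [Set.mem_ofPred_eq] at hh
  omega
end

section
/- Let m be a positive natural number and let H be the numerical semigroup generated by m and m+1. Let e be a positive integer. If the cardinality of H \ (eH* + H) equals em (where m is the smallest nonzero element of H), then e ∈ H. -/
/-!
Since `m ∈ H*`, the set `eH* + H` contains `em + H`, and the Apéry set `H \ (n + H)` of an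
element `n` of a numerical semigroup has exactly `n` elements. The hypothesis therefore
forces `H \ (eH* + H) = H \ (em + H)`. Now `e(m+1) ∈ H` lies in `eH* + H`, hence in `em + H`,
so `e = e(m+1) - em ∈ H`.
-/

namespace Nat

theorem compl_image_add_left (n : ℕ) (S : Set ℕ) :
    ((n + ·) '' S)ᶜ = Set.Iio n ∪ (n + ·) '' Sᶜ := by
  ext x
  simp only [Set.mem_compl_iff, Set.mem_image, Set.mem_union, Set.mem_Iio, not_exists, not_and]
  constructor
  · intro hx
    by_cases hxn : x < n
    · exact Or.inl hxn
    · exact Or.inr ⟨x - n, fun hS => hx _ hS (by omega), by omega⟩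
  · rintro (hxn | ⟨y, hy, rfl⟩) z hz hzx
    · omega
    · exact hy (Nat.add_left_cancel hzx ▸ hz)

theorem ncard_compl_image_add_left {S : Set ℕ} (hS : Sᶜ.Finite) (n : ℕ) :
    ((n + ·) '' S)ᶜ.ncard = n + Sᶜ.ncard := by
  have hdisj : Disjoint (Set.Iio n) ((n + ·) '' Sᶜ) := by
    rw [Set.disjoint_left]
    rintro _ hx ⟨y, -, rfl⟩
    exact absurd hx (by simp)
  rw [compl_image_add_left, Set.ncard_union_eq hdisj (Set.finite_Iio n) (hS.image _),
    Set.ncard_image_of_injective _ (add_right_injective n)]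
  simp [← Finset.coe_Iio, Set.ncard_coe_finset]

theorem finite_compl_image_add_left {S : Set ℕ} (hS : Sᶜ.Finite) (n : ℕ) :
    ((n + ·) '' S)ᶜ.Finite := by
  rw [compl_image_add_left]
  exact (Set.finite_Iio n).union (hS.image _)

end Nat

namespace IsNumericalSemigroup

variable {H : Set ℕ}

theorem mul_mem_s8 (hH : IsNumericalSemigroup H) (k : ℕ) {m : ℕ} (hm : m ∈ H) : k * m ∈ H := by
  induction k with
  | zero => simpa using hH.1
  | succ k ih => simpa [add_mul] using hH.2.1 _ ih _ hm

theorem ncard_sdiff_image_add (hH : IsNumericalSemigroup H) {n : ℕ} (hn : n ∈ H) :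
    (H \ (n + ·) '' H).ncard = n := by
  obtain ⟨-, hadd, hfin⟩ := hH
  have hsub : Hᶜ ⊆ ((n + ·) '' H)ᶜ := by
    rintro x hx ⟨y, hy, rfl⟩
    exact hx (hadd n hn y hy)
  rw [← compl_sdiff_compl, Set.ncard_sdiff hsub hfin, Nat.ncard_compl_image_add_left hfin]
  omega

theorem finite_sdiff_image_add (hH : IsNumericalSemigroup H) (n : ℕ) :
    (H \ (n + ·) '' H).Finite :=
  (Nat.finite_compl_image_add_left hH.2.2 n).subset fun _ hx => hx.2

theorem sdiff_eq_of_ncard_eq (hH : IsNumericalSemigroup H) {m : ℕ} (hm : m ∈ H) (hm0 : m ≠ 0)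
    {e : ℕ} (hcard : (H \ {x | ∃ l ∈ H, l ≠ 0 ∧ ∃ mu ∈ H, x = e * l + mu}).ncard = e * m) :
    H \ {x | ∃ l ∈ H, l ≠ 0 ∧ ∃ mu ∈ H, x = e * l + mu} = H \ (e * m + ·) '' H := by
  refine Set.eq_of_subset_of_ncard_le ?_ ?_ (hH.finite_sdiff_image_add _)
  · refine Set.sdiff_subset_sdiff_right ?_
    rintro _ ⟨mu, hmu, rfl⟩
    exact ⟨m, hm, hm0, mu, hmu, rfl⟩
  · rw [hcard, hH.ncard_sdiff_image_add (hH.mul_mem_s8 e hm)]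

end IsNumericalSemigroup

theorem isNumericalSemigroup_consecutive {m : ℕ} (hm : 0 < m) :
    IsNumericalSemigroup {n : ℕ | ∃ a b : ℕ, n = a * m + b * (m + 1)} := by
  refine ⟨⟨0, 0, by ring⟩, ?_, ?_⟩
  · rintro _ ⟨a, b, rfl⟩ _ ⟨c, d, rfl⟩
    exact ⟨a + c, b + d, by ring⟩
  · refine (Set.finite_Iio (m * m)).subset fun x hx => Set.mem_Iio.mpr ?_
    by_contra! hle
    -- writing `x = q m + r` with `r < m ≤ q`, we get `x = (q - r) m + r (m + 1)`
    have hr : x % m < m := Nat.mod_lt x hm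
    have hq : m ≤ x / m := (Nat.le_div_iff_mul_le hm).mpr hle
    have hx_eq := Nat.div_add_mod x m
    refine hx ⟨x / m - x % m, x % m, ?_⟩
    zify [hr.le.trans hq] at hx_eq ⊢
    linear_combination hx_eq.symm

theorem stmt_8_general (m : ℕ) (hm : 0 < m)
    (H : Set ℕ) (hH : H = {n : ℕ | ∃ a b : ℕ, n = a * m + b * (m + 1)})
    (e : ℕ)
    (hcard : (H \ {x | ∃ l ∈ H, l ≠ 0 ∧ ∃ mu ∈ H, x = e * l + mu}).ncard = e * m) :
    e ∈ H := by
  have hS : IsNumericalSemigroup H := hH ▸ isNumericalSemigroup_consecutive hm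
  have hmH : m ∈ H := hH ▸ ⟨1, 0, by ring⟩
  have hm1H : m + 1 ∈ H := hH ▸ ⟨0, 1, by ring⟩
  have hQ : e * (m + 1) ∈ {x | ∃ l ∈ H, l ≠ 0 ∧ ∃ mu ∈ H, x = e * l + mu} :=
    ⟨m + 1, hm1H, m.succ_ne_zero, 0, hS.1, rfl⟩
  have hT : e * (m + 1) ∈ (e * m + ·) '' H := by
    by_contra hT
    have hdiff : e * (m + 1) ∈ H \ (e * m + ·) '' H := ⟨hS.mul_mem_s8 e hm1H, hT⟩
    rw [← hS.sdiff_eq_of_ncard_eq hmH hm.ne' hcard] at hdiff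
    exact hdiff.2 hQ
  obtain ⟨k, hk, hsum⟩ := hT
  obtain rfl : k = e := by linarith
  exact hk

/-- For H = ⟨m, m+1⟩ (m positive) and a positive integer e: if
#(H \ (eH* + H)) = em, then e ∈ H. -/
theorem stmt_8 (m : ℕ) (hm : 0 < m)
    (H : Set ℕ) (hH : H = {n : ℕ | ∃ a b : ℕ, n = a * m + b * (m + 1)})
    (e : ℕ) (he : 0 < e)
    (hcard : (H \ {x | ∃ l ∈ H, l ≠ 0 ∧ ∃ mu ∈ H, x = e * l + mu}).ncard = e * m) :
    e ∈ H :=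
  stmt_8_general m hm H hH e hcard
end
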